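/- Let P be the three-point FT distribution on {(a,b),(0,0),(-a,-b)} with weights p·e^{a/2}, q, p·e^{-a/2} where a > 0 is a free parameter subject to a·tanh(a/2) ≥ ⟨x⟩, p = ⟨x⟩/(2a sinh(a/2)), q = 1 - ⟨x⟩/(a tanh(a/2)), b = a⟨y⟩/⟨x⟩. Then ⟨y²⟩ = (⟨y⟩²/⟨x⟩)·(a/tanh(a/2)), which is strictly increasing in a; hence ⟨y²⟩ is minimized when a tanh(a/2) = ⟨x⟩ (i.e. q = 0, reducing to the two-point minimal distribution). -/

import Mathlib

/-! With `b = a⟨y⟩/⟨x⟩` and `p = ⟨x⟩/(2a sinh(a/2))`, the two outer atoms contribute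
`2p cosh(a/2) b² = (⟨y⟩²/⟨x⟩) · a coth(a/2)` to `⟨y²⟩`. The derivative of `a coth(a/2)` is
`(sinh a - a) / (2 sinh²(a/2)) > 0`, and `a tanh(a/2)` is strictly increasing as well, so the
constraint `a tanh(a/2) ≥ ⟨x⟩` means `a ≥ a₀` and the minimum sits at the boundary `a = a₀`. -/

open Real Set

namespace Real

lemma tanh_pos {x : ℝ} (hx : 0 < x) : 0 < tanh x := by
  rw [tanh_eq_sinh_div_cosh]
  exact div_pos (sinh_pos_iff.2 hx) (cosh_pos x)

lemma tanh_strictMono : StrictMono tanh := by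
  intro x y hxy
  by_contra! h
  have := artanh_le_artanh (neg_one_lt_tanh y) (tanh_lt_one x) h
  rw [artanh_tanh, artanh_tanh] at this
  exact hxy.not_ge this

lemma hasDerivAt_tanh (x : ℝ) : HasDerivAt tanh (1 / cosh x ^ 2) x := by
  have h := (hasDerivAt_sinh x).div (hasDerivAt_cosh x) (cosh_pos x).ne'
  rw [show sinh / cosh = tanh from funext fun y => (tanh_eq_sinh_div_cosh y).symm] at h
  refine h.congr_deriv ?_
  rw [← cosh_sq_sub_sinh_sq x]
  ring

end Real

lemma strictMonoOn_mul_tanh_half : StrictMonoOn (fun a : ℝ => a * tanh (a / 2)) (Ioi 0) :=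
  fun a ha b hb hab =>
    mul_lt_mul hab (tanh_strictMono.monotone (by linarith)) (tanh_pos (half_pos ha)) (le_of_lt hb)

lemma hasDerivAt_div_tanh_half {a : ℝ} (ha : a ≠ 0) :
    HasDerivAt (fun a : ℝ => a / tanh (a / 2)) ((sinh a - a) / (2 * sinh (a / 2) ^ 2)) a := by
  have hs : sinh (a / 2) ≠ 0 := by simpa [sinh_eq_zero] using ha
  have hc : cosh (a / 2) ≠ 0 := (cosh_pos _).ne'
  have ht : tanh (a / 2) ≠ 0 := by simp [tanh_eq_sinh_div_cosh, hs, hc]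
  have htanh : HasDerivAt (fun a : ℝ => tanh (a / 2)) (1 / cosh (a / 2) ^ 2 * (1 / 2)) a :=
    (hasDerivAt_tanh (a / 2)).comp (h := fun a : ℝ => a / 2) a ((hasDerivAt_id' a).div_const 2)
  refine ((hasDerivAt_id' a).div htanh ht).congr_deriv ?_
  rw [tanh_eq_sinh_div_cosh, show a = 2 * (a / 2) by ring, sinh_two_mul]
  field_simp

lemma strictMonoOn_div_tanh_half : StrictMonoOn (fun a : ℝ => a / tanh (a / 2)) (Ioi 0) := by
  have hderiv (a : ℝ) (ha : 0 < a) := hasDerivAt_div_tanh_half ha.ne'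
  refine strictMonoOn_of_hasDerivWithinAt_pos (convex_Ioi 0)
    (fun a ha => (hderiv a ha).continuousAt.continuousWithinAt)
    (fun a ha => (hderiv a (by simpa using ha)).hasDerivWithinAt) fun a ha => ?_
  rw [interior_Ioi] at ha
  have := self_lt_sinh_iff.2 ha
  have := sinh_pos_iff.2 (half_pos ha)
  positivity

lemma second_moment_eq_mul_div_tanh_half {qx qy a : ℝ} (hqx : qx ≠ 0) (ha : a ≠ 0) :
    qx / (2 * a * sinh (a / 2)) * exp (a / 2) * (a * qy / qx) ^ 2
      + qx / (2 * a * sinh (a / 2)) * exp (-(a / 2)) * (-(a * qy / qx)) ^ 2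
      = qy ^ 2 / qx * (a / tanh (a / 2)) := by
  have hs : sinh (a / 2) ≠ 0 := by simpa [sinh_eq_zero] using ha
  have hc : cosh (a / 2) ≠ 0 := (cosh_pos _).ne'
  have hexp : exp (a / 2) + exp (-(a / 2)) = 2 * cosh (a / 2) := by rw [cosh_eq]; ring
  calc qx / (2 * a * sinh (a / 2)) * exp (a / 2) * (a * qy / qx) ^ 2
        + qx / (2 * a * sinh (a / 2)) * exp (-(a / 2)) * (-(a * qy / qx)) ^ 2
      = qx / (2 * a * sinh (a / 2)) * (a * qy / qx) ^ 2 * (exp (a / 2) + exp (-(a / 2))) := by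
        ring
    _ = qy ^ 2 / qx * (a / tanh (a / 2)) := by
        rw [hexp, tanh_eq_sinh_div_cosh]
        field_simp

/-- For the three-point FT distribution on `{(a,b), (0,0), (-a,-b)}` with weights
`p e^{a/2}, q, p e^{-a/2}`, where `a tanh(a/2) ≥ ⟨x⟩`, `p = ⟨x⟩/(2 a sinh(a/2))`,
`q = 1 - ⟨x⟩/(a tanh(a/2))` and `b = a ⟨y⟩/⟨x⟩`, the second moment is
`⟨y²⟩ = (⟨y⟩²/⟨x⟩) (a / tanh(a/2))`, which is strictly increasing in `a`;
hence `⟨y²⟩` is minimized when `a tanh(a/2) = ⟨x⟩` (i.e. `q = 0`, reducing to the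
two-point minimal distribution). -/
theorem three_point_second_moment_minimized_at_two_point
    (qx qy : ℝ) (hqx : 0 < qx) (hqy : qy ≠ 0) :
    (∀ a b p : ℝ, 0 < a → qx ≤ a * Real.tanh (a / 2) →
        p = qx / (2 * a * Real.sinh (a / 2)) → b = a * qy / qx →
        p * Real.exp (a / 2) * b ^ 2 + p * Real.exp (-(a / 2)) * (-b) ^ 2
          = (qy ^ 2 / qx) * (a / Real.tanh (a / 2))) ∧
    StrictMonoOn (fun a : ℝ => (qy ^ 2 / qx) * (a / Real.tanh (a / 2)))
      (Set.Ioi 0) ∧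
    (∀ a₀ a : ℝ, 0 < a₀ → a₀ * Real.tanh (a₀ / 2) = qx →
        0 < a → qx ≤ a * Real.tanh (a / 2) →
        (qy ^ 2 / qx) * (a₀ / Real.tanh (a₀ / 2))
          ≤ (qy ^ 2 / qx) * (a / Real.tanh (a / 2))) := by
  have hc : 0 < qy ^ 2 / qx := div_pos (by positivity) hqx
  have hmono : StrictMonoOn (fun a : ℝ => (qy ^ 2 / qx) * (a / tanh (a / 2))) (Ioi 0) :=
    fun a ha b hb hab => mul_lt_mul_of_pos_left (strictMonoOn_div_tanh_half ha hb hab) hc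
  refine ⟨?_, hmono, ?_⟩
  · rintro a b p ha - rfl rfl
    exact second_moment_eq_mul_div_tanh_half hqx.ne' ha.ne'
  · intro a₀ a ha₀ hqx₀ ha hqx_le
    have ha₀_le : a₀ ≤ a :=
      (strictMonoOn_mul_tanh_half.le_iff_le ha₀ ha).1 (hqx₀ ▸ hqx_le)
    exact hmono.monotoneOn ha₀ ha ha₀_le
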